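/- arXiv:2304.05848 — 3 statements merged into one kernel-verified Lean document; each statement's English description precedes it below -/
import Mathlib

section
/- For α ∈ (0,1), t ≥ 0, and any positive real λ (playing the role of an eigenvalue), the scalar identity (λ^α + t)^{-1} = (sin(πα)/π) ∫_0^∞ ρ^α / ((ρ + λ)(ρ^{2α} + 2t cos(πα) ρ^α + t²)) dρ holds. -/
open Real MeasureTheory

noncomputable section

namespace ScalarBalak

open Complex Filter Set intervalIntegral Topology


/-- strip half-width -/
def bnd (α : ℝ) : ℝ := min ((π + π / α) / 2) (3 * π / 2)

lemma pi_lt_bnd {α : ℝ} (hα0 : 0 < α) (hα1 : α < 1) : π < bnd α := by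
  have h1 : π < π / α := by
    rw [lt_div_iff₀ hα0]
    nlinarith [Real.pi_pos]
  have h2 : π < (π + π / α) / 2 := by linarith
  have h3 : π < 3 * π / 2 := by nlinarith [Real.pi_pos]
  exact lt_min h2 h3

lemma bnd_pos {α : ℝ} (hα0 : 0 < α) (hα1 : α < 1) : 0 < bnd α :=
  lt_trans Real.pi_pos (pi_lt_bnd hα0 hα1)

lemma mul_bnd_lt_pi {α : ℝ} (hα0 : 0 < α) (hα1 : α < 1) : α * bnd α < π := by
  have h1 : α * bnd α ≤ α * ((π + π / α) / 2) :=
    mul_le_mul_of_nonneg_left (min_le_left _ _) hα0.le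
  have h2 : α * ((π + π / α) / 2) = (α * π + π) / 2 := by
    field_simp
  have h3 : α * π < π := by nlinarith [Real.pi_pos]
  linarith [h1, h2 ▸ h1]

lemma bnd_lt_two_pi (α : ℝ) : bnd α < 2 * π := by
  have : (3 : ℝ) * π / 2 < 2 * π := by nlinarith [Real.pi_pos]
  exact lt_of_le_of_lt (min_le_right _ _) this

/-- Key lower bound: for `|Im z| ≤ d ≤ π` and `t ≥ 0`,
`|e^z + t| ≥ sin d * e^(Re z)`. -/
lemma abs_exp_add_ge {t : ℝ} (ht : 0 ≤ t) {d : ℝ} (hd : d ≤ π) {z : ℂ}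
    (hz : |z.im| ≤ d) :
    Real.sin d * Real.exp z.re ≤ ‖Complex.exp z + (t : ℂ)‖ := by
  have hd0 : 0 ≤ d := le_trans (abs_nonneg _) hz
  set A := Real.exp z.re with hA
  have hApos : 0 < A := Real.exp_pos _
  have hcos : Real.cos d ≤ Real.cos z.im := by
    have h := Real.cos_le_cos_of_nonneg_of_le_pi (abs_nonneg z.im) hd hz
    rwa [Real.cos_abs] at h
  have hre : (Complex.exp z + (t : ℂ)).re = A * Real.cos z.im + t := by
    simp [Complex.add_re, Complex.exp_re, hA]
  have him : (Complex.exp z + (t : ℂ)).im = A * Real.sin z.im := by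
    simp [Complex.add_im, Complex.exp_im, hA]
  have hnormSq : Complex.normSq (Complex.exp z + (t : ℂ))
      = (A * Real.cos z.im + t) ^ 2 + (A * Real.sin z.im) ^ 2 := by
    rw [Complex.normSq_apply, hre, him]; ring
  have h1 : Real.sin z.im ^ 2 + Real.cos z.im ^ 2 = 1 := Real.sin_sq_add_cos_sq _
  have h2 : Real.sin d ^ 2 + Real.cos d ^ 2 = 1 := Real.sin_sq_add_cos_sq _
  have hkey : (Real.sin d * A) ^ 2 ≤ Complex.normSq (Complex.exp z + (t : ℂ)) := by
    rw [hnormSq]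
    nlinarith [mul_le_mul_of_nonneg_left hcos (mul_nonneg (by linarith : (0:ℝ) ≤ 2 * t) hApos.le),
      sq_nonneg (t + A * Real.cos d), sq_nonneg A]
  have hsd : 0 ≤ Real.sin d * A :=
    mul_nonneg (Real.sin_nonneg_of_nonneg_of_le_pi hd0 hd) hApos.le
  calc Real.sin d * A = Real.sqrt ((Real.sin d * A) ^ 2) := (Real.sqrt_sq hsd).symm
    _ ≤ Real.sqrt (Complex.normSq (Complex.exp z + (t : ℂ))) := Real.sqrt_le_sqrt hkey
    _ = ‖Complex.exp z + (t : ℂ)‖ := (Complex.norm_def _).symm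





def w0 (l : ℝ) : ℂ := (Real.log l : ℂ)
def EE (l : ℝ) : ℂ → ℂ := dslope Complex.exp (w0 l)
def HH (α t l : ℝ) : ℂ → ℂ :=
  fun w => -Complex.exp w / (EE l w * (Complex.exp (α * w) + t))
def gg (α t l : ℝ) : ℂ → ℂ := dslope (HH α t l) (w0 l)
def U (α : ℝ) : Set ℂ := {w : ℂ | |w.im| < bnd α}

lemma isOpen_U (α : ℝ) : IsOpen (U α) :=
  isOpen_lt (continuous_abs.comp Complex.continuous_im) continuous_const

lemma w0_mem_U {α : ℝ} (l : ℝ) (hα0 : 0 < α) (hα1 : α < 1) : w0 l ∈ U α := by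
  simp only [U, w0, mem_setOf_eq, Complex.ofReal_im, abs_zero]
  exact bnd_pos hα0 hα1

lemma U_mem_nhds {α : ℝ} (l : ℝ) (hα0 : 0 < α) (hα1 : α < 1) : U α ∈ 𝓝 (w0 l) :=
  (isOpen_U α).mem_nhds (w0_mem_U l hα0 hα1)

lemma exp_w0 {l : ℝ} (hl : 0 < l) : Complex.exp (w0 l) = l := by
  rw [w0, ← Complex.ofReal_exp, Real.exp_log hl]

lemma exp_alpha_w0 {α l : ℝ} (hl : 0 < l) :
    Complex.exp ((α : ℂ) * w0 l) = ((l ^ α : ℝ) : ℂ) := by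
  rw [w0, ← Complex.ofReal_mul, ← Complex.ofReal_exp]
  congr 1
  rw [Real.rpow_def_of_pos hl, mul_comm]

lemma factor2_ne {α t : ℝ} (hα0 : 0 < α) (hα1 : α < 1) (ht : 0 ≤ t)
    {w : ℂ} (hw : w ∈ U α) : Complex.exp ((α : ℂ) * w) + (t : ℂ) ≠ 0 := by
  have him : |((α : ℂ) * w).im| ≤ α * bnd α := by
    simp only [Complex.mul_im, Complex.ofReal_re, Complex.ofReal_im, zero_mul, add_zero]
    rw [abs_mul, abs_of_pos hα0]
    exact mul_le_mul_of_nonneg_left (le_of_lt hw) hα0.le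
  have hb := abs_exp_add_ge ht (le_of_lt (mul_bnd_lt_pi hα0 hα1)) him
  have hs : 0 < Real.sin (α * bnd α) :=
    Real.sin_pos_of_pos_of_lt_pi (mul_pos hα0 (bnd_pos hα0 hα1)) (mul_bnd_lt_pi hα0 hα1)
  intro h
  rw [h] at hb
  simp only [map_zero, norm_zero] at hb
  nlinarith [Real.exp_pos ((α : ℂ) * w).re]

lemma EE_w0 {l : ℝ} (hl : 0 < l) : EE l (w0 l) = l := by
  rw [EE, dslope_same, Complex.deriv_exp, exp_w0 hl]

lemma EE_eq {l : ℝ} (hl : 0 < l) {w : ℂ} (hw : w ≠ w0 l) :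
    EE l w = (Complex.exp w - l) / (w - w0 l) := by
  rw [EE, dslope_of_ne _ hw, slope_def_field, exp_w0 hl]

lemma EE_ne {α l : ℝ} (hα0 : 0 < α) (hα1 : α < 1) (hl : 0 < l)
    {w : ℂ} (hw : w ∈ U α) : EE l w ≠ 0 := by
  rcases eq_or_ne w (w0 l) with h | h
  · rw [h, EE_w0 hl]
    exact_mod_cast ne_of_gt hl
  · rw [EE_eq hl h]
    apply div_ne_zero _ (sub_ne_zero.mpr h)
    rw [sub_ne_zero, ← exp_w0 hl, Ne, Complex.exp_eq_exp_iff_exists_int]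
    rintro ⟨n, hn⟩
    apply h
    have him : w.im = (n : ℝ) * (2 * π) := by
      have := congrArg Complex.im hn
      simpa [w0, Complex.mul_im] using this
    have hn0 : n = 0 := by
      by_contra hn0
      have h1 : (1 : ℝ) ≤ |(n : ℝ)| := by
        exact_mod_cast Int.one_le_abs (by exact_mod_cast hn0)
      have h2 : |w.im| < 2 * π := lt_trans hw (bnd_lt_two_pi α)
      rw [him, abs_mul, abs_of_pos (by positivity : (0:ℝ) < 2 * π)] at h2
      nlinarith [Real.pi_pos]
    rw [hn0] at hn
    simpa using hn

lemma HH_diffOn {α t l : ℝ} (hα0 : 0 < α) (hα1 : α < 1) (ht : 0 ≤ t) (hl : 0 < l) :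
    DifferentiableOn ℂ (HH α t l) (U α) := by
  apply DifferentiableOn.div
  · exact (Complex.differentiable_exp.neg).differentiableOn
  · apply DifferentiableOn.mul
    · exact (differentiableOn_dslope (U_mem_nhds l hα0 hα1)).mpr
        Complex.differentiable_exp.differentiableOn
    · exact (((differentiable_id.const_mul (α : ℂ)).cexp).add_const _).differentiableOn
  · intro w hw
    exact mul_ne_zero (EE_ne hα0 hα1 hl hw) (factor2_ne hα0 hα1 ht hw)

lemma gg_diffOn {α t l : ℝ} (hα0 : 0 < α) (hα1 : α < 1) (ht : 0 ≤ t) (hl : 0 < l) :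
    DifferentiableOn ℂ (gg α t l) (U α) :=
  (differentiableOn_dslope (U_mem_nhds l hα0 hα1)).mpr (HH_diffOn hα0 hα1 ht hl)

lemma lpow_add_pos {α t l : ℝ} (ht : 0 ≤ t) (hl : 0 < l) : 0 < l ^ α + t := by
  have := Real.rpow_pos_of_pos hl α
  linarith

lemma HH_w0 {α t l : ℝ} (ht : 0 ≤ t) (hl : 0 < l) :
    HH α t l (w0 l) = -(((l ^ α + t : ℝ) : ℂ))⁻¹ := by
  have h1 : ((l : ℂ)) ≠ 0 := by exact_mod_cast ne_of_gt hl
  have h2 : ((l ^ α + t : ℝ) : ℂ) ≠ 0 := by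
    exact_mod_cast ne_of_gt (lpow_add_pos ht hl)
  have h2' : ((l ^ α : ℝ) : ℂ) + (t : ℂ) ≠ 0 := by
    push_cast at h2 ⊢; exact h2
  rw [HH, EE_w0 hl, exp_w0 hl, exp_alpha_w0 hl]
  push_cast
  field_simp





def Qfun (α t : ℝ) (x : ℝ) : ℝ :=
  (Real.exp (α * x) * Real.cos (π * α) + t) ^ 2 + (Real.exp (α * x) * Real.sin (π * α)) ^ 2
def Ffun (α t l : ℝ) (x : ℝ) : ℝ :=
  Real.exp x * Real.exp (α * x) / ((Real.exp x + l) * Qfun α t x)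
def Pfun (l : ℝ) (x : ℝ) : ℝ := ((x - Real.log l) ^ 2 + π ^ 2)⁻¹

lemma sin_pi_alpha_pos {α : ℝ} (hα0 : 0 < α) (hα1 : α < 1) : 0 < Real.sin (π * α) :=
  Real.sin_pos_of_pos_of_lt_pi (by positivity) (by nlinarith [Real.pi_pos])

lemma Qfun_pos {α t : ℝ} (hα0 : 0 < α) (hα1 : α < 1) (x : ℝ) : 0 < Qfun α t x := by
  have h := sin_pi_alpha_pos hα0 hα1
  have h2 := Real.exp_pos (α * x)
  have : 0 < (Real.exp (α * x) * Real.sin (π * α)) ^ 2 := by positivity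
  have : 0 ≤ (Real.exp (α * x) * Real.cos (π * α) + t) ^ 2 := sq_nonneg _
  rw [Qfun]; linarith

/-- the function appearing on horizontal edges -/
lemma gg_eq {α t l : ℝ} (hα0 : 0 < α) (hα1 : α < 1) (ht : 0 ≤ t) (hl : 0 < l)
    {w : ℂ} (hwU : w ∈ U α) (hw : w ≠ w0 l) (hexp : Complex.exp w ≠ (l : ℂ)) :
    gg α t l w = -Complex.exp w / ((Complex.exp w - l) * (Complex.exp ((α : ℂ) * w) + t))
      - HH α t l (w0 l) / (w - w0 l) := by
  have hD := factor2_ne hα0 hα1 ht hwU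
  have hw0 : w - w0 l ≠ 0 := sub_ne_zero.mpr hw
  have hel : Complex.exp w - l ≠ 0 := sub_ne_zero.mpr hexp
  rw [gg, dslope_of_ne _ hw, slope_def_field]
  rw [show HH α t l w = -Complex.exp w / (((Complex.exp w - l) / (w - w0 l))
      * (Complex.exp ((α : ℂ) * w) + t)) by rw [HH, EE_eq hl hw]]
  field_simp

lemma mem_U_edge {α : ℝ} (hα0 : 0 < α) (hα1 : α < 1) {c : ℝ} (hc : |c| ≤ π) (x : ℝ) :
    (x : ℂ) + (c : ℂ) * Complex.I ∈ U α := by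
  have him : ((x : ℂ) + (c : ℂ) * Complex.I).im = c := by simp
  simp only [U, mem_setOf_eq, him]
  exact lt_of_le_of_lt hc (pi_lt_bnd hα0 hα1)

lemma ne_w0_edge {l c : ℝ} (hc : c ≠ 0) (x : ℝ) :
    (x : ℂ) + (c : ℂ) * Complex.I ≠ w0 l := by
  intro h
  have := congrArg Complex.im h
  simp [w0] at this
  exact hc this

lemma exp_edge (x : ℝ) (c : ℝ) :
    Complex.exp ((x : ℂ) + (c : ℂ) * Complex.I)
      = (Real.exp x : ℂ) * ((Real.cos c : ℂ) + (Real.sin c : ℂ) * Complex.I) := by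
  rw [Complex.exp_add, Complex.exp_mul_I, ← Complex.ofReal_exp, ← Complex.ofReal_cos,
    ← Complex.ofReal_sin]


lemma exp_alpha_edge {α : ℝ} (x c : ℝ) :
    Complex.exp ((α : ℂ) * ((x : ℂ) + (c : ℂ) * Complex.I))
      = (Real.exp (α*x) : ℂ) * ((Real.cos (α*c) : ℂ) + (Real.sin (α*c) : ℂ) * Complex.I) := by
  rw [show (α : ℂ) * ((x : ℂ) + (c : ℂ) * Complex.I)
      = ((α*x : ℝ) : ℂ) + ((α*c : ℝ) : ℂ) * Complex.I by push_cast; ring, exp_edge]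

/-- pure algebra: the difference of edge values -/
lemma alg_main (E A C S L T cc X W π' Qq Pq : ℂ)
    (hEL : E + L ≠ 0)
    (hDm : A*C + T - A*S*Complex.I ≠ 0) (hDp : A*C + T + A*S*Complex.I ≠ 0)
    (hpb : X - W - π' * Complex.I ≠ 0) (hpt : X - W + π' * Complex.I ≠ 0)
    (hQ : (A*C + T)^2 + (A*S)^2 = Qq) (hQne : Qq ≠ 0)
    (hP : (X - W)^2 + π'^2 = Pq) (hPne : Pq ≠ 0) :
    (-(-E)/(((-E) - L) * (A*C + T - A*S*Complex.I)) - cc/(X - W - π'*Complex.I))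
     - (-(-E)/(((-E) - L) * (A*C + T + A*S*Complex.I)) - cc/(X - W + π'*Complex.I))
     = -2*Complex.I*S*(E*A/((E+L)*Qq)) - 2*π'*Complex.I*cc*Pq⁻¹ := by
  have ha : (A*C + T - A*S*Complex.I)⁻¹ - (A*C + T + A*S*Complex.I)⁻¹
      = 2*A*S*Complex.I/Qq := by
    rw [show (A*C + T - A*S*Complex.I)⁻¹ = 1/(A*C + T - A*S*Complex.I) by rw [one_div],
        show (A*C + T + A*S*Complex.I)⁻¹ = 1/(A*C + T + A*S*Complex.I) by rw [one_div],
        div_sub_div _ _ hDm hDp,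
        show (A*C + T - A*S*Complex.I) * (A*C + T + A*S*Complex.I) = Qq by
          linear_combination hQ - (A*S)^2 * Complex.I_sq]
    congr 1
    ring
  have hb : (X - W - π'*Complex.I)⁻¹ - (X - W + π'*Complex.I)⁻¹
      = 2*π'*Complex.I/Pq := by
    rw [show (X - W - π'*Complex.I)⁻¹ = 1/(X - W - π'*Complex.I) by rw [one_div],
        show (X - W + π'*Complex.I)⁻¹ = 1/(X - W + π'*Complex.I) by rw [one_div],
        div_sub_div _ _ hpb hpt,
        show (X - W - π'*Complex.I) * (X - W + π'*Complex.I) = Pq by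
          linear_combination hP - π'^2 * Complex.I_sq]
    congr 1
    ring
  have hneg : ((-E) - L) = -(E+L) := by ring
  simp only [div_eq_mul_inv, mul_inv, hneg, inv_neg]
  linear_combination (-(E * (E+L)⁻¹)) * ha - cc * hb


lemma edge_diff {α t l : ℝ} (hα0 : 0 < α) (hα1 : α < 1) (ht : 0 ≤ t) (hl : 0 < l) (x : ℝ) :
    gg α t l ((x : ℂ) + ((-π : ℝ) : ℂ) * Complex.I)
      - gg α t l ((x : ℂ) + ((π : ℝ) : ℂ) * Complex.I)
      = -2 * Complex.I * ((Real.sin (π * α) : ℝ) : ℂ) * ((Ffun α t l x : ℝ) : ℂ)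
        - 2 * (π : ℂ) * Complex.I * HH α t l (w0 l) * ((Pfun l x : ℝ) : ℂ) := by
  have habs_neg : |(-π : ℝ)| ≤ π := by rw [abs_neg, abs_of_pos Real.pi_pos]
  have habs_pos : |(π : ℝ)| ≤ π := by rw [abs_of_pos Real.pi_pos]
  have hUb := mem_U_edge hα0 hα1 habs_neg x
  have hUt := mem_U_edge hα0 hα1 habs_pos x
  have hwb := ne_w0_edge (l := l) (neg_ne_zero.mpr Real.pi_ne_zero) x
  have hwt := ne_w0_edge (l := l) Real.pi_ne_zero x
  have eb : Complex.exp ((x : ℂ) + ((-π : ℝ) : ℂ) * Complex.I) = -(Real.exp x : ℂ) := by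
    rw [exp_edge, Real.cos_neg, Real.sin_neg, Real.cos_pi, Real.sin_pi]
    push_cast
    ring
  have et : Complex.exp ((x : ℂ) + ((π : ℝ) : ℂ) * Complex.I) = -(Real.exp x : ℂ) := by
    rw [exp_edge, Real.cos_pi, Real.sin_pi]
    push_cast
    ring
  have hexpb : Complex.exp ((x : ℂ) + ((-π : ℝ) : ℂ) * Complex.I) ≠ (l : ℂ) := by
    rw [eb]
    intro h
    have h' : -Real.exp x = l := by exact_mod_cast h
    nlinarith [Real.exp_pos x]
  have hexpt : Complex.exp ((x : ℂ) + ((π : ℝ) : ℂ) * Complex.I) ≠ (l : ℂ) := by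
    rw [et]
    intro h
    have h' : -Real.exp x = l := by exact_mod_cast h
    nlinarith [Real.exp_pos x]
  have eαb : Complex.exp ((α : ℂ) * ((x : ℂ) + ((-π : ℝ) : ℂ) * Complex.I))
      = (Real.exp (α*x) : ℂ) * ((Real.cos (π*α) : ℂ) - (Real.sin (π*α) : ℂ) * Complex.I) := by
    rw [exp_alpha_edge, show α * (-π) = -(π*α) by ring, Real.cos_neg, Real.sin_neg]
    push_cast
    ring
  have eαt : Complex.exp ((α : ℂ) * ((x : ℂ) + ((π : ℝ) : ℂ) * Complex.I))
      = (Real.exp (α*x) : ℂ) * ((Real.cos (π*α) : ℂ) + (Real.sin (π*α) : ℂ) * Complex.I) := by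
    rw [exp_alpha_edge, show α * π = π*α by ring]
  have hggb := gg_eq hα0 hα1 ht hl hUb hwb hexpb
  have hggt := gg_eq hα0 hα1 ht hl hUt hwt hexpt
  -- nonvanishing instances
  have hEL : (Real.exp x : ℂ) + (l : ℂ) ≠ 0 := by
    have : (0:ℝ) < Real.exp x + l := by positivity
    exact_mod_cast this.ne'
  have hDm : (Real.exp (α*x) : ℂ) * (Real.cos (π*α) : ℂ) + (t : ℂ)
      - (Real.exp (α*x) : ℂ) * (Real.sin (π*α) : ℂ) * Complex.I ≠ 0 := by
    rw [show (Real.exp (α*x) : ℂ) * (Real.cos (π*α) : ℂ) + (t : ℂ)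
        - (Real.exp (α*x) : ℂ) * (Real.sin (π*α) : ℂ) * Complex.I
        = Complex.exp ((α : ℂ) * ((x : ℂ) + ((-π : ℝ) : ℂ) * Complex.I)) + (t:ℂ) by
      rw [eαb]; ring]
    exact factor2_ne hα0 hα1 ht hUb
  have hDp : (Real.exp (α*x) : ℂ) * (Real.cos (π*α) : ℂ) + (t : ℂ)
      + (Real.exp (α*x) : ℂ) * (Real.sin (π*α) : ℂ) * Complex.I ≠ 0 := by
    rw [show (Real.exp (α*x) : ℂ) * (Real.cos (π*α) : ℂ) + (t : ℂ)
        + (Real.exp (α*x) : ℂ) * (Real.sin (π*α) : ℂ) * Complex.I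
        = Complex.exp ((α : ℂ) * ((x : ℂ) + ((π : ℝ) : ℂ) * Complex.I)) + (t:ℂ) by
      rw [eαt]; ring]
    exact factor2_ne hα0 hα1 ht hUt
  have hpb : (x : ℂ) - (Real.log l : ℂ) - (π:ℂ) * Complex.I ≠ 0 := by
    intro h
    have := congrArg Complex.im h
    simp at this
  have hpt : (x : ℂ) - (Real.log l : ℂ) + (π:ℂ) * Complex.I ≠ 0 := by
    intro h
    have := congrArg Complex.im h
    simp at this
  have hQ : ((Real.exp (α*x) : ℂ) * (Real.cos (π*α) : ℂ) + (t : ℂ))^2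
      + ((Real.exp (α*x) : ℂ) * (Real.sin (π*α) : ℂ))^2 = ((Qfun α t x : ℝ) : ℂ) := by
    rw [Qfun]; push_cast; ring
  have hQne : ((Qfun α t x : ℝ) : ℂ) ≠ 0 := by
    exact_mod_cast (Qfun_pos hα0 hα1 (t := t) x).ne'
  have hP : ((x : ℂ) - (Real.log l : ℂ))^2 + (π:ℂ)^2
      = (((x - Real.log l)^2 + π^2 : ℝ) : ℂ) := by push_cast; ring
  have hPne : (((x - Real.log l)^2 + π^2 : ℝ) : ℂ) ≠ 0 := by
    have : (0:ℝ) < (x - Real.log l)^2 + π^2 := by positivity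
    exact_mod_cast this.ne'
  have hF : ((Ffun α t l x : ℝ) : ℂ)
      = (Real.exp x : ℂ) * (Real.exp (α*x) : ℂ)
        / (((Real.exp x : ℂ) + (l:ℂ)) * ((Qfun α t x : ℝ) : ℂ)) := by
    rw [Ffun]; push_cast; ring
  have hPf : ((Pfun l x : ℝ) : ℂ) = ((((x - Real.log l)^2 + π^2 : ℝ) : ℂ))⁻¹ := by
    rw [Pfun]; push_cast; ring
  have halg := alg_main (Real.exp x : ℂ) (Real.exp (α*x) : ℂ) (Real.cos (π*α) : ℂ)
    (Real.sin (π*α) : ℂ) (l : ℂ) (t : ℂ) (HH α t l (w0 l)) (x : ℂ) (Real.log l : ℂ)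
    (π : ℂ) ((Qfun α t x : ℝ) : ℂ) (((x - Real.log l)^2 + π^2 : ℝ) : ℂ)
    hEL hDm hDp hpb hpt hQ hQne hP hPne
  rw [hggb, hggt, eb, et, eαb, eαt, hF, hPf]
  simp only [w0, Complex.ofReal_neg] at halg ⊢
  linear_combination halg





lemma integrableOn_exp_mul_Iic {b : ℝ} (hb : 0 < b) (c : ℝ) :
    IntegrableOn (fun x => Real.exp (b * x)) (Iic c) := by
  refine integrableOn_Iic_of_intervalIntegral_norm_bounded (Real.exp (b * c) / b) c
    (fun y => (by continuity : Continuous fun x : ℝ => Real.exp (b * x)).integrableOn_Ioc)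
    tendsto_id (Eventually.of_forall fun y => ?_)
  have hint : ∫ x in y..c, ‖Real.exp (b * x)‖ = b⁻¹ * (Real.exp (b * c) - Real.exp (b * y)) := by
    simp_rw [norm_of_nonneg (Real.exp_pos _).le]
    have h2 := intervalIntegral.smul_integral_comp_mul_left (a := y) (b := c)
      (fun u => Real.exp u) b
    rw [_root_.integral_exp] at h2
    have : (b : ℝ) ≠ 0 := hb.ne'
    calc ∫ x in y..c, Real.exp (b * x)
        = b⁻¹ * (b • ∫ x in y..c, Real.exp (b * x)) := by
          rw [smul_eq_mul]; field_simp
      _ = b⁻¹ * (Real.exp (b * c) - Real.exp (b * y)) := by rw [h2]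
  simp only [id] at hint ⊢
  rw [hint, div_eq_inv_mul]
  have : Real.exp (b * c) - Real.exp (b * y) ≤ Real.exp (b * c) := by
    nlinarith [Real.exp_pos (b * y)]
  apply mul_le_mul_of_nonneg_left this (by positivity)

lemma Ffun_nonneg {α t l : ℝ} (hl : 0 < l) (x : ℝ) : 0 ≤ Ffun α t l x := by
  unfold Ffun Qfun
  positivity

lemma Ffun_continuous {α t l : ℝ} (hα0 : 0 < α) (hα1 : α < 1) (hl : 0 < l) :
    Continuous (Ffun α t l) := by
  apply Continuous.div
  · continuity
  · unfold Qfun; continuity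
  · intro x
    exact (mul_pos (by positivity) (Qfun_pos hα0 hα1 x)).ne'

lemma Ffun_le_left {α t l : ℝ} (hα0 : 0 < α) (hα1 : α < 1) (hl : 0 < l) (x : ℝ) :
    Ffun α t l x ≤ Real.exp ((1 - α) * x) / (l * Real.sin (π * α) ^ 2) := by
  have hs := sin_pi_alpha_pos hα0 hα1
  have hA := Real.exp_pos (α * x)
  have hE := Real.exp_pos x
  have hQ := Qfun_pos (t := t) hα0 hα1 x
  have hden : l * (Real.exp (α * x) * Real.sin (π * α)) ^ 2 ≤ (Real.exp x + l) * Qfun α t x := by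
    apply mul_le_mul (by linarith) _ (by positivity) (by positivity)
    rw [Qfun]
    nlinarith [sq_nonneg (Real.exp (α * x) * Real.cos (π * α) + t)]
  have h1 : Ffun α t l x ≤ Real.exp x * Real.exp (α * x)
      / (l * (Real.exp (α * x) * Real.sin (π * α)) ^ 2) := by
    rw [Ffun]
    apply div_le_div_of_nonneg_left (by positivity) (by positivity) hden
  refine h1.trans (le_of_eq ?_)
  rw [show (1 - α) * x = x - α * x by ring, Real.exp_sub]
  field_simp

lemma Ffun_le_right {α t l : ℝ} (hα0 : 0 < α) (hα1 : α < 1) (hl : 0 < l) (x : ℝ) :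
    Ffun α t l x ≤ Real.exp (-α * x) / Real.sin (π * α) ^ 2 := by
  have hs := sin_pi_alpha_pos hα0 hα1
  have hA := Real.exp_pos (α * x)
  have hE := Real.exp_pos x
  have hQ := Qfun_pos (t := t) hα0 hα1 x
  have hden : Real.exp x * (Real.exp (α * x) * Real.sin (π * α)) ^ 2
      ≤ (Real.exp x + l) * Qfun α t x := by
    apply mul_le_mul (by linarith) _ (by positivity) (by positivity)
    rw [Qfun]
    nlinarith [sq_nonneg (Real.exp (α * x) * Real.cos (π * α) + t)]
  have h1 : Ffun α t l x ≤ Real.exp x * Real.exp (α * x)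
      / (Real.exp x * (Real.exp (α * x) * Real.sin (π * α)) ^ 2) := by
    rw [Ffun]
    apply div_le_div_of_nonneg_left (by positivity) (by positivity) hden
  refine h1.trans (le_of_eq ?_)
  rw [show (-α : ℝ) * x = -(α * x) by ring, Real.exp_neg]
  field_simp

lemma Ffun_integrable {α t l : ℝ} (hα0 : 0 < α) (hα1 : α < 1) (ht : 0 ≤ t) (hl : 0 < l) :
    Integrable (Ffun α t l) := by
  have hs := sin_pi_alpha_pos hα0 hα1
  have hmeas : AEStronglyMeasurable (Ffun α t l) volume :=
    (Ffun_continuous (t := t) hα0 hα1 hl).aestronglyMeasurable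
  rw [← integrableOn_univ, ← Set.Iic_union_Ioi (a := (0 : ℝ))]
  apply IntegrableOn.union
  · apply Integrable.mono
      (((integrableOn_exp_mul_Iic (b := 1 - α) (by linarith) 0)).div_const
        (l * Real.sin (π * α) ^ 2))
      (hmeas.restrict)
    filter_upwards with x
    rw [Real.norm_of_nonneg (Ffun_nonneg hl x), Real.norm_of_nonneg (by positivity)]
    exact Ffun_le_left hα0 hα1 hl x
  · apply Integrable.mono
      ((exp_neg_integrableOn_Ioi 0 hα0).div_const (Real.sin (π * α) ^ 2))
      (hmeas.restrict)
    filter_upwards with x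
    rw [Real.norm_of_nonneg (Ffun_nonneg hl x), Real.norm_of_nonneg (by positivity)]
    exact Ffun_le_right hα0 hα1 hl x

lemma Pfun_eq (l : ℝ) (x : ℝ) :
    Pfun l x = (1 + ((x - Real.log l) / π) ^ 2)⁻¹ * (π ^ 2)⁻¹ := by
  rw [Pfun]
  have hπ := Real.pi_ne_zero
  field_simp
  ring

lemma Pfun_integrable (l : ℝ) : Integrable (Pfun l) := by
  have h1 : Integrable (fun x : ℝ => (1 + (x / π) ^ 2)⁻¹) :=
    integrable_inv_one_add_sq.comp_div Real.pi_ne_zero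
  have h2 : Integrable (fun x : ℝ => (1 + ((x - Real.log l) / π) ^ 2)⁻¹) :=
    h1.comp_sub_right (Real.log l)
  have h3 := h2.mul_const ((π : ℝ) ^ 2)⁻¹
  apply h3.congr
  filter_upwards with x
  rw [Pfun_eq]

lemma Pfun_integral (l : ℝ) : ∫ x : ℝ, Pfun l x = 1 := by
  have h0 : ∀ x : ℝ, Pfun l x = (fun y : ℝ => (1 + (y / π) ^ 2)⁻¹ * (π ^ 2)⁻¹)
      (x - Real.log l) := fun x => Pfun_eq l x
  rw [MeasureTheory.integral_congr_ae (Eventually.of_forall h0),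
    integral_sub_right_eq_self (fun y : ℝ => (1 + (y / π) ^ 2)⁻¹ * (π ^ 2)⁻¹) (Real.log l)]
  rw [MeasureTheory.integral_mul_const]
  rw [MeasureTheory.Measure.integral_comp_div (fun y : ℝ => (1 + y ^ 2)⁻¹) π]
  rw [integral_univ_inv_one_add_sq]
  rw [abs_of_pos Real.pi_pos, smul_eq_mul]
  field_simp





/-- bound for `gg` on the right vertical edge. -/
lemma gg_right_bound {α t l : ℝ} (hα0 : 0 < α) (hα1 : α < 1) (ht : 0 ≤ t) (hl : 0 < l)
    {R y : ℝ} (hy : |y| ≤ π) (hR1 : Real.log l < R) (hR2 : 2 * l ≤ Real.exp R) :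
    ‖gg α t l ((R : ℂ) + (y : ℂ) * Complex.I)‖
      ≤ 2 * Real.exp (-(α * R)) / Real.sin (π * α)
        + ‖HH α t l (w0 l)‖ / (R - Real.log l) := by
  have hs := sin_pi_alpha_pos hα0 hα1
  set w : ℂ := (R : ℂ) + (y : ℂ) * Complex.I with hw
  have hwre : w.re = R := by simp [hw]
  have hwim : w.im = y := by simp [hw]
  have hwU : w ∈ U α := mem_U_edge hα0 hα1 hy R
  have habs_exp : ‖Complex.exp w‖ = Real.exp R := by
    rw [Complex.norm_exp, hwre]
  have hw0 : w ≠ w0 l := by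
    intro h
    have h2 := congrArg Complex.re h
    rw [hwre] at h2
    simp [w0] at h2
    linarith
  have hexp : Complex.exp w ≠ (l : ℂ) := by
    intro h
    have h2 := congrArg (‖·‖) h
    rw [habs_exp, Complex.norm_real, Real.norm_eq_abs, abs_of_pos hl] at h2
    nlinarith [Real.exp_pos R]
  rw [gg_eq hα0 hα1 ht hl hwU hw0 hexp]
  refine (norm_sub_le _ _).trans (add_le_add ?_ ?_)
  · -- main term
    have hd1 : Real.exp R - l ≤ ‖Complex.exp w - (l : ℂ)‖ := by
      have h3 := norm_sub_norm_le (Complex.exp w) ((l : ℂ))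
      rw [habs_exp,
        Complex.norm_real, Real.norm_eq_abs, abs_of_pos hl] at h3
      exact h3
    have hd2 : Real.sin (π * α) * Real.exp (α * R)
        ≤ ‖Complex.exp ((α : ℂ) * w) + (t : ℂ)‖ := by
      have him : |((α : ℂ) * w).im| ≤ π * α := by
        simp only [Complex.mul_im, Complex.ofReal_re, Complex.ofReal_im, zero_mul, add_zero,
          hwim]
        rw [abs_mul, abs_of_pos hα0]
        nlinarith
      have hre : ((α : ℂ) * w).re = α * R := by
        simp only [Complex.mul_re, Complex.ofReal_re, Complex.ofReal_im, zero_mul, hwre, hwim]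
        ring
      have := abs_exp_add_ge ht (by nlinarith [Real.pi_pos] : π * α ≤ π) him
      rwa [hre] at this
    have hDpos : 0 < (Real.exp R / 2) * (Real.sin (π * α) * Real.exp (α * R)) := by positivity
    have hDle : (Real.exp R / 2) * (Real.sin (π * α) * Real.exp (α * R))
        ≤ ‖Complex.exp w - (l : ℂ)‖
          * ‖Complex.exp ((α : ℂ) * w) + (t : ℂ)‖ := by
      apply mul_le_mul (by linarith) hd2 (by positivity) (by positivity)
    have hnorm : ‖-Complex.exp w / ((Complex.exp w - (l:ℂ)) * (Complex.exp ((α:ℂ)*w) + (t:ℂ)))‖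
        = Real.exp R / (‖Complex.exp w - (l : ℂ)‖
          * ‖Complex.exp ((α : ℂ) * w) + (t : ℂ)‖) := by
      rw [norm_div, norm_neg, norm_mul, habs_exp]
    rw [hnorm]
    calc Real.exp R / (‖Complex.exp w - (l : ℂ)‖
          * ‖Complex.exp ((α : ℂ) * w) + (t : ℂ)‖)
        ≤ Real.exp R / ((Real.exp R / 2) * (Real.sin (π * α) * Real.exp (α * R))) :=
          div_le_div_of_nonneg_left (Real.exp_pos R).le hDpos hDle
      _ = 2 * Real.exp (-(α * R)) / Real.sin (π * α) := by
          rw [Real.exp_neg]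
          field_simp
  · -- pole term
    have hgt : 0 < R - Real.log l := by linarith
    have habs : R - Real.log l ≤ ‖w - w0 l‖ := by
      have h4 := Complex.abs_re_le_norm (w - w0 l)
      have h5 : (w - w0 l).re = R - Real.log l := by
        simp [hw, w0]
      rw [h5] at h4
      exact (le_abs_self _).trans h4
    rw [norm_div]
    exact div_le_div_of_nonneg_left (norm_nonneg _) hgt habs

/-- bound for `gg` on the left vertical edge. -/
lemma gg_left_bound {α t l : ℝ} (hα0 : 0 < α) (hα1 : α < 1) (ht : 0 ≤ t) (hl : 0 < l)
    {R y : ℝ} (hy : |y| ≤ π) (hR1 : Real.exp (-R) ≤ l / 2) (hR2 : |Real.log l| + 1 ≤ R) :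
    ‖gg α t l (((-R : ℝ) : ℂ) + (y : ℂ) * Complex.I)‖
      ≤ 2 * Real.exp (-((1 - α) * R)) / (l * Real.sin (π * α))
        + ‖HH α t l (w0 l)‖ / (R - |Real.log l|) := by
  have hs := sin_pi_alpha_pos hα0 hα1
  set w : ℂ := ((-R : ℝ) : ℂ) + (y : ℂ) * Complex.I with hw
  have hwre : w.re = -R := by simp [hw]
  have hwim : w.im = y := by simp [hw]
  have hwU : w ∈ U α := mem_U_edge hα0 hα1 hy (-R)
  have habs_exp : ‖Complex.exp w‖ = Real.exp (-R) := by
    rw [Complex.norm_exp, hwre]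
  have hw0 : w ≠ w0 l := by
    intro h
    have h2 := congrArg Complex.re h
    rw [hwre] at h2
    simp [w0] at h2
    have : R ≤ |Real.log l| := by
      rw [← h2, abs_neg]
      exact le_abs_self R
    linarith
  have hexp : Complex.exp w ≠ (l : ℂ) := by
    intro h
    have h2 := congrArg (‖·‖) h
    rw [habs_exp, Complex.norm_real, Real.norm_eq_abs, abs_of_pos hl] at h2
    nlinarith
  rw [gg_eq hα0 hα1 ht hl hwU hw0 hexp]
  refine (norm_sub_le _ _).trans (add_le_add ?_ ?_)
  · have hd1 : l / 2 ≤ ‖Complex.exp w - (l : ℂ)‖ := by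
      have h3 := norm_sub_norm_le ((l : ℂ)) (Complex.exp w)
      rw [norm_sub_rev] at h3
      rw [habs_exp,
        Complex.norm_real, Real.norm_eq_abs, abs_of_pos hl] at h3
      linarith
    have hd2 : Real.sin (π * α) * Real.exp (α * (-R))
        ≤ ‖Complex.exp ((α : ℂ) * w) + (t : ℂ)‖ := by
      have him : |((α : ℂ) * w).im| ≤ π * α := by
        simp only [Complex.mul_im, Complex.ofReal_re, Complex.ofReal_im, zero_mul, add_zero,
          hwim]
        rw [abs_mul, abs_of_pos hα0]
        nlinarith
      have hre : ((α : ℂ) * w).re = α * (-R) := by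
        simp only [Complex.mul_re, Complex.ofReal_re, Complex.ofReal_im, zero_mul, hwre, hwim]
        ring
      have := abs_exp_add_ge ht (by nlinarith [Real.pi_pos] : π * α ≤ π) him
      rwa [hre] at this
    have hDpos : 0 < (l / 2) * (Real.sin (π * α) * Real.exp (α * (-R))) := by positivity
    have hDle : (l / 2) * (Real.sin (π * α) * Real.exp (α * (-R)))
        ≤ ‖Complex.exp w - (l : ℂ)‖
          * ‖Complex.exp ((α : ℂ) * w) + (t : ℂ)‖ := by
      apply mul_le_mul hd1 hd2 (by positivity) (by positivity)
    have hnorm : ‖-Complex.exp w / ((Complex.exp w - (l:ℂ)) * (Complex.exp ((α:ℂ)*w) + (t:ℂ)))‖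
        = Real.exp (-R) / (‖Complex.exp w - (l : ℂ)‖
          * ‖Complex.exp ((α : ℂ) * w) + (t : ℂ)‖) := by
      rw [norm_div, norm_neg, norm_mul, habs_exp]
    rw [hnorm]
    calc Real.exp (-R) / (‖Complex.exp w - (l : ℂ)‖
          * ‖Complex.exp ((α : ℂ) * w) + (t : ℂ)‖)
        ≤ Real.exp (-R) / ((l / 2) * (Real.sin (π * α) * Real.exp (α * (-R)))) :=
          div_le_div_of_nonneg_left (Real.exp_pos _).le hDpos hDle
      _ = 2 * Real.exp (-((1 - α) * R)) / (l * Real.sin (π * α)) := by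
          rw [show -((1 - α) * R) = (-R) - (α * (-R)) by ring, Real.exp_sub]
          field_simp
  · have hgt : 0 < R - |Real.log l| := by linarith
    have habs : R - |Real.log l| ≤ ‖w - w0 l‖ := by
      have h4 := Complex.abs_re_le_norm (w - w0 l)
      have h5 : (w - w0 l).re = -R - Real.log l := by
        simp [hw, w0]
      rw [h5] at h4
      refine le_trans ?_ h4
      have h6 : |(-R : ℝ) - Real.log l| = R + Real.log l := by
        rw [show (-R : ℝ) - Real.log l = -(R + Real.log l) by ring, abs_neg]
        rw [abs_of_pos]
        nlinarith [neg_abs_le (Real.log l)]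
      rw [h6]
      nlinarith [neg_abs_le (Real.log l)]
    rw [norm_div]
    exact div_le_div_of_nonneg_left (norm_nonneg _) hgt habs

lemma abs_le_pi_of_mem_uIoc {y : ℝ} (hy : y ∈ Set.uIoc (-π) π) : |y| ≤ π := by
  rw [Set.uIoc_of_le (by linarith [Real.pi_pos] : -π ≤ π)] at hy
  exact abs_le.mpr ⟨hy.1.le, hy.2⟩

lemma tendsto_side_right {α t l : ℝ} (hα0 : 0 < α) (hα1 : α < 1) (ht : 0 ≤ t) (hl : 0 < l) :
    Tendsto (fun R : ℝ => ∫ y in (-π)..π, gg α t l ((R : ℂ) + (y : ℂ) * Complex.I))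
      atTop (𝓝 0) := by
  have hs := sin_pi_alpha_pos hα0 hα1
  apply squeeze_zero_norm' (a := fun R : ℝ =>
    (2 * Real.exp (-(α * R)) / Real.sin (π * α)
      + ‖HH α t l (w0 l)‖ / (R - Real.log l)) * |π - (-π)|)
  · filter_upwards [eventually_gt_atTop (Real.log l),
      Real.tendsto_exp_atTop.eventually_ge_atTop (2 * l)] with R h1 h2
    apply intervalIntegral.norm_integral_le_of_norm_le_const
    intro y hy
    exact gg_right_bound hα0 hα1 ht hl (abs_le_pi_of_mem_uIoc hy) h1 h2
  · have T1 : Tendsto (fun R : ℝ => 2 * Real.exp (-(α * R)) / Real.sin (π * α))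
        atTop (𝓝 0) := by
      have ha : Tendsto (fun R : ℝ => α * R) atTop atTop :=
        Tendsto.const_mul_atTop hα0 tendsto_id
      have := Real.tendsto_exp_neg_atTop_nhds_zero.comp ha
      have h2 := (this.const_mul 2).div_const (Real.sin (π * α))
      simpa using h2
    have T2 : Tendsto (fun R : ℝ => ‖HH α t l (w0 l)‖ / (R - Real.log l)) atTop (𝓝 0) := by
      have ha : Tendsto (fun R : ℝ => R - Real.log l) atTop atTop :=
        tendsto_atTop_add_const_right atTop (-Real.log l) tendsto_id
      have := (tendsto_inv_atTop_zero.comp ha).const_mul ‖HH α t l (w0 l)‖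
      simp only [mul_zero] at this
      simpa [div_eq_mul_inv, Function.comp] using this
    have := (T1.add T2).mul_const |π - (-π)|
    simpa using this

lemma tendsto_side_left {α t l : ℝ} (hα0 : 0 < α) (hα1 : α < 1) (ht : 0 ≤ t) (hl : 0 < l) :
    Tendsto (fun R : ℝ => ∫ y in (-π)..π, gg α t l (((-R : ℝ) : ℂ) + (y : ℂ) * Complex.I))
      atTop (𝓝 0) := by
  have hs := sin_pi_alpha_pos hα0 hα1
  apply squeeze_zero_norm' (a := fun R : ℝ =>
    (2 * Real.exp (-((1 - α) * R)) / (l * Real.sin (π * α))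
      + ‖HH α t l (w0 l)‖ / (R - |Real.log l|)) * |π - (-π)|)
  · filter_upwards [Real.tendsto_exp_neg_atTop_nhds_zero.eventually
      (eventually_le_nhds (by positivity : (0 : ℝ) < l / 2)),
      eventually_ge_atTop (|Real.log l| + 1)] with R h1 h2
    apply intervalIntegral.norm_integral_le_of_norm_le_const
    intro y hy
    exact gg_left_bound hα0 hα1 ht hl (abs_le_pi_of_mem_uIoc hy) h1 h2
  · have T1 : Tendsto (fun R : ℝ => 2 * Real.exp (-((1 - α) * R)) / (l * Real.sin (π * α)))
        atTop (𝓝 0) := by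
      have ha : Tendsto (fun R : ℝ => (1 - α) * R) atTop atTop :=
        Tendsto.const_mul_atTop (by linarith) tendsto_id
      have := Real.tendsto_exp_neg_atTop_nhds_zero.comp ha
      have h2 := (this.const_mul 2).div_const (l * Real.sin (π * α))
      simpa using h2
    have T2 : Tendsto (fun R : ℝ => ‖HH α t l (w0 l)‖ / (R - |Real.log l|)) atTop (𝓝 0) := by
      have ha : Tendsto (fun R : ℝ => R - |Real.log l|) atTop atTop :=
        tendsto_atTop_add_const_right atTop (-|Real.log l|) tendsto_id
      have := (tendsto_inv_atTop_zero.comp ha).const_mul ‖HH α t l (w0 l)‖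
      simp only [mul_zero] at this
      simpa [div_eq_mul_inv, Function.comp] using this
    have := (T1.add T2).mul_const |π - (-π)|
    simpa using this

lemma edge_cont {α t l : ℝ} (hα0 : 0 < α) (hα1 : α < 1) (ht : 0 ≤ t) (hl : 0 < l)
    {c : ℝ} (hc : |c| ≤ π) (R : ℝ) :
    IntervalIntegrable (fun x : ℝ => gg α t l ((x : ℂ) + (c : ℂ) * Complex.I))
      volume (-R) R := by
  have hcont : ContinuousOn (fun x : ℝ => gg α t l ((x : ℂ) + (c : ℂ) * Complex.I)) univ := by
    apply ContinuousOn.comp ((gg_diffOn hα0 hα1 ht hl).continuousOn)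
    · exact Continuous.continuousOn (by continuity)
    · intro x _
      exact mem_U_edge hα0 hα1 hc x
  exact (hcont.mono (subset_univ _)).intervalIntegrable

lemma key_complex {α t l : ℝ} (hα0 : 0 < α) (hα1 : α < 1) (ht : 0 ≤ t) (hl : 0 < l) :
    -2 * Complex.I * ((Real.sin (π * α) : ℝ) : ℂ) * ((∫ x : ℝ, Ffun α t l x : ℝ) : ℂ)
      - 2 * (π : ℂ) * Complex.I * HH α t l (w0 l) = 0 := by
  have hs := sin_pi_alpha_pos hα0 hα1
  set cc := HH α t l (w0 l) with hcc
  set Δ : ℝ → ℂ := fun x => -2 * Complex.I * ((Real.sin (π * α) : ℝ) : ℂ)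
    * ((Ffun α t l x : ℝ) : ℂ) - 2 * (π : ℂ) * Complex.I * cc * ((Pfun l x : ℝ) : ℂ) with hΔ
  have hΔint : Integrable Δ := by
    apply Integrable.sub
    · exact ((Ffun_integrable hα0 hα1 ht hl).ofReal.const_mul _)
    · exact ((Pfun_integrable l).ofReal.const_mul _)
  have hrect : ∀ R : ℝ, (∫ x in (-R)..R, Δ x)
      = -(Complex.I • (∫ y in (-π)..π, gg α t l ((R : ℂ) + (y : ℂ) * Complex.I))
          - Complex.I • (∫ y in (-π)..π, gg α t l (((-R : ℝ) : ℂ) + (y : ℂ) * Complex.I))) := by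
    intro R
    have hsub : uIcc ((⟨-R, -π⟩ : ℂ)).re ((⟨R, π⟩ : ℂ)).re
        ×ℂ uIcc ((⟨-R, -π⟩ : ℂ)).im ((⟨R, π⟩ : ℂ)).im ⊆ U α := by
      intro w hw
      have him : w.im ∈ uIcc (-π) π := hw.2
      rw [Set.uIcc_of_le (by linarith [Real.pi_pos] : -π ≤ π)] at him
      have : |w.im| ≤ π := abs_le.mpr ⟨him.1, him.2⟩
      exact lt_of_le_of_lt this (pi_lt_bnd hα0 hα1)
    have h0 := Complex.integral_boundary_rect_eq_zero_of_differentiableOn (gg α t l)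
      ⟨-R, -π⟩ ⟨R, π⟩ ((gg_diffOn hα0 hα1 ht hl).mono hsub)
    simp only [show ((⟨-R, -π⟩ : ℂ)).re = -R from rfl, show ((⟨-R, -π⟩ : ℂ)).im = -π from rfl,
      show ((⟨R, π⟩ : ℂ)).re = R from rfl, show ((⟨R, π⟩ : ℂ)).im = π from rfl] at h0
    have hib := edge_cont hα0 hα1 ht hl (c := -π)
      (by rw [abs_neg, abs_of_pos Real.pi_pos]) R
    have hit := edge_cont hα0 hα1 ht hl (c := π) (by rw [abs_of_pos Real.pi_pos]) R
    have hBT : (∫ x in (-R)..R, gg α t l ((x : ℂ) + ((-π : ℝ) : ℂ) * Complex.I))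
        - (∫ x in (-R)..R, gg α t l ((x : ℂ) + ((π : ℝ) : ℂ) * Complex.I))
        = ∫ x in (-R)..R, Δ x := by
      rw [← intervalIntegral.integral_sub hib hit]
      apply intervalIntegral.integral_congr
      intro x _
      exact edge_diff hα0 hα1 ht hl x
    rw [show ((-π : ℝ) : ℂ) = ((-π : ℝ) : ℂ) from rfl] at hBT
    push_cast at h0 hBT
    rw [hBT] at h0
    push_cast
    linear_combination h0
  have h1 : Tendsto (fun R : ℝ => ∫ x in (-R)..R, Δ x) atTop (𝓝 (∫ x : ℝ, Δ x)) :=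
    intervalIntegral_tendsto_integral hΔint tendsto_neg_atTop_atBot tendsto_id
  have h2 : Tendsto (fun R : ℝ => ∫ x in (-R)..R, Δ x) atTop (𝓝 0) := by
    have hR := tendsto_side_right hα0 hα1 ht hl
    have hL := tendsto_side_left hα0 hα1 ht hl
    have := ((hR.const_smul Complex.I).sub (hL.const_smul Complex.I)).neg
    simp only [smul_zero, sub_zero, neg_zero] at this
    apply this.congr'
    filter_upwards with R
    exact (hrect R).symm
  have h3 : ∫ x : ℝ, Δ x = 0 := tendsto_nhds_unique h1 h2
  have h4 : ∫ x : ℝ, Δ x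
      = -2 * Complex.I * ((Real.sin (π * α) : ℝ) : ℂ) * ((∫ x : ℝ, Ffun α t l x : ℝ) : ℂ)
        - 2 * (π : ℂ) * Complex.I * cc := by
    have hFi : Integrable (fun x : ℝ => ((Ffun α t l x : ℝ) : ℂ)) :=
      (Ffun_integrable hα0 hα1 ht hl).ofReal
    have hPi : Integrable (fun x : ℝ => ((Pfun l x : ℝ) : ℂ)) := (Pfun_integrable l).ofReal
    have e1 : ∫ x : ℝ, ((-2 * Complex.I * ((Real.sin (π * α) : ℝ) : ℂ))
          * ((Ffun α t l x : ℝ) : ℂ)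
          - (2 * (π : ℂ) * Complex.I * cc) * ((Pfun l x : ℝ) : ℂ))
        = (∫ x : ℝ, (-2 * Complex.I * ((Real.sin (π * α) : ℝ) : ℂ)) * ((Ffun α t l x : ℝ) : ℂ))
          - ∫ x : ℝ, (2 * (π : ℂ) * Complex.I * cc) * ((Pfun l x : ℝ) : ℂ) :=
      MeasureTheory.integral_sub
        (hFi.const_mul (-2 * Complex.I * ((Real.sin (π * α) : ℝ) : ℂ)))
        (hPi.const_mul (2 * (π : ℂ) * Complex.I * cc))
    have e3 : ∫ x : ℝ, ((Ffun α t l x : ℝ) : ℂ) = ((∫ x : ℝ, Ffun α t l x : ℝ) : ℂ) :=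
      integral_ofReal
    have e4 : ∫ x : ℝ, ((Pfun l x : ℝ) : ℂ) = ((∫ x : ℝ, Pfun l x : ℝ) : ℂ) :=
      integral_ofReal
    have e2 : ∫ x : ℝ, Δ x
        = ∫ x : ℝ, ((-2 * Complex.I * ((Real.sin (π * α) : ℝ) : ℂ)) * ((Ffun α t l x : ℝ) : ℂ)
          - (2 * (π : ℂ) * Complex.I * cc) * ((Pfun l x : ℝ) : ℂ)) := by
      apply MeasureTheory.integral_congr_ae
      filter_upwards with x
      rw [hΔ]
    rw [e2, e1, MeasureTheory.integral_const_mul, MeasureTheory.integral_const_mul,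
      e3, e4, Pfun_integral]
    push_cast
    ring
  rw [h4] at h3
  exact h3

lemma Ffun_integral {α t l : ℝ} (hα0 : 0 < α) (hα1 : α < 1) (ht : 0 ≤ t) (hl : 0 < l) :
    ∫ x : ℝ, Ffun α t l x = π / (Real.sin (π * α) * (l ^ α + t)) := by
  have hs := sin_pi_alpha_pos hα0 hα1
  have hL := lpow_add_pos (α := α) ht hl
  have h := key_complex hα0 hα1 ht hl
  rw [HH_w0 ht hl] at h
  have hS : ((Real.sin (π * α) : ℝ) : ℂ) ≠ 0 := by exact_mod_cast hs.ne'
  have hLc : ((l ^ α + t : ℝ) : ℂ) ≠ 0 := by exact_mod_cast hL.ne'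
  have h6 : ((Real.sin (π * α) : ℝ) : ℂ) * ((∫ x : ℝ, Ffun α t l x : ℝ) : ℂ)
      - ((π : ℝ) : ℂ) * (((l ^ α + t : ℝ) : ℂ))⁻¹ = 0 := by
    have h7 : (-2 * Complex.I) * (((Real.sin (π * α) : ℝ) : ℂ)
        * ((∫ x : ℝ, Ffun α t l x : ℝ) : ℂ)
        - ((π : ℝ) : ℂ) * (((l ^ α + t : ℝ) : ℂ))⁻¹) = 0 := by
      linear_combination h
    rcases mul_eq_zero.mp h7 with h8 | h8
    · exact absurd h8 (by simp [Complex.I_ne_zero])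
    · exact h8
  rw [sub_eq_zero] at h6
  have h9 : Real.sin (π * α) * (∫ x : ℝ, Ffun α t l x) = π * (l ^ α + t)⁻¹ := by
    exact_mod_cast h6
  rw [eq_div_iff (by positivity : Real.sin (π * α) * (l ^ α + t) ≠ 0)]
  rw [inv_eq_one_div] at h9
  field_simp at h9
  linarith [h9]





lemma subst_integral {α t l : ℝ} (hα0 : 0 < α) (hα1 : α < 1) (ht : 0 ≤ t) (hl : 0 < l) :
    ∫ ρ in Set.Ioi (0 : ℝ),
        ρ ^ α / ((ρ + l) * (ρ ^ (2 * α) + 2 * t * Real.cos (π * α) * ρ ^ α + t ^ 2))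
      = ∫ x : ℝ, Ffun α t l x := by
  have himg := MeasureTheory.integral_image_eq_integral_abs_deriv_smul (f := Real.exp)
    (f' := Real.exp) (s := univ)
    (g := fun ρ : ℝ => ρ ^ α / ((ρ + l) * (ρ ^ (2 * α) + 2 * t * Real.cos (π * α) * ρ ^ α + t ^ 2)))
    MeasurableSet.univ (fun x _ => (Real.hasDerivAt_exp x).hasDerivWithinAt)
    (Real.exp_injective.injOn)
  rw [Set.image_univ, Real.range_exp] at himg
  rw [himg, MeasureTheory.setIntegral_univ]
  apply MeasureTheory.integral_congr_ae
  filter_upwards with x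
  have hA : Real.exp x ^ α = Real.exp (α * x) := by
    rw [mul_comm, Real.exp_mul]
  have hA2 : Real.exp x ^ (2 * α) = Real.exp (α * x) * Real.exp (α * x) := by
    rw [show (2 : ℝ) * α = α * 2 by ring, ← Real.exp_mul, ← Real.exp_add]
    congr 1
    ring
  have hQ : Real.exp x ^ (2 * α) + 2 * t * Real.cos (π * α) * Real.exp x ^ α + t ^ 2
      = Qfun α t x := by
    rw [hA, hA2, Qfun]
    have := Real.sin_sq_add_cos_sq (π * α)
    nlinarith [this]
  rw [smul_eq_mul, abs_of_pos (Real.exp_pos x), hQ, hA, Ffun]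
  ring

theorem scalar_balakrishnan' (α t l : ℝ) (hα0 : 0 < α) (hα1 : α < 1)
    (ht : 0 ≤ t) (hl : 0 < l) :
    (l ^ α + t)⁻¹ =
      (Real.sin (π * α) / π) *
        ∫ ρ in Set.Ioi (0 : ℝ),
          ρ ^ α / ((ρ + l) * (ρ ^ (2 * α) + 2 * t * Real.cos (π * α) * ρ ^ α + t ^ 2)) := by
  rw [subst_integral hα0 hα1 ht hl, Ffun_integral hα0 hα1 ht hl]
  have h1 := sin_pi_alpha_pos hα0 hα1
  have h2 := lpow_add_pos (α := α) ht hl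
  have h3 := Real.pi_pos
  field_simp



end ScalarBalak

end

/-- Scalar Balakrishnan-type integral representation:
for `α ∈ (0,1)`, `t ≥ 0`, `λ > 0`,
`(λ^α + t)⁻¹ = (sin(πα)/π) ∫_0^∞ ρ^α / ((ρ+λ)(ρ^{2α} + 2t cos(πα) ρ^α + t²)) dρ`. -/
theorem scalar_balakrishnan (α t l : ℝ) (hα0 : 0 < α) (hα1 : α < 1)
    (ht : 0 ≤ t) (hl : 0 < l) :
    (l ^ α + t)⁻¹ =
      (Real.sin (π * α) / π) *
        ∫ ρ in Set.Ioi (0 : ℝ),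
          ρ ^ α / ((ρ + l) * (ρ ^ (2 * α) + 2 * t * Real.cos (π * α) * ρ ^ α + t ^ 2)) :=
  ScalarBalak.scalar_balakrishnan' α t l hα0 hα1 ht hl
end

section
/- Let b > 0, α ∈ (0,1), and define d(z) = e^z + 2b cos(πα) + b² e^{-z} for complex z. Then z₀ = ln b + i(1-α)π is a zero of d, and for all complex z with |z - z₀| ≤ (1/2) min{1, |tan(πα)|}, one has |d(z)| ≥ b sin(πα) |z - z₀|. -/
open Real Complex

lemma sinh_est (w : ℂ) (h : ‖w‖ ≤ 1) :
    ‖Complex.sinh w - w‖ ≤ (2/9) * ‖w‖ ^ 3 := by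
  have h1 := Complex.exp_bound h (by norm_num : (0:ℕ) < 3)
  have h2 := Complex.exp_bound (x := -w) (by simpa using h) (by norm_num : (0:ℕ) < 3)
  have e1 : ∑ m ∈ Finset.range 3, w ^ m / m.factorial = 1 + w + w^2/2 := by
    rw [Finset.sum_range_succ, Finset.sum_range_succ, Finset.sum_range_succ]
    norm_num
  have e2 : ∑ m ∈ Finset.range 3, (-w) ^ m / m.factorial = 1 - w + w^2/2 := by
    rw [Finset.sum_range_succ, Finset.sum_range_succ, Finset.sum_range_succ]
    norm_num; ring
  rw [e1] at h1; rw [e2] at h2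
  rw [norm_neg] at h2
  norm_num [Nat.factorial] at h1 h2
  have key : Complex.sinh w - w =
      ((Complex.exp w - (1 + w + w^2/2)) - (Complex.exp (-w) - (1 - w + w^2/2))) / 2 := by
    rw [Complex.sinh]; ring
  rw [key, norm_div]
  have := norm_sub_le (Complex.exp w - (1 + w + w^2/2))
    (Complex.exp (-w) - (1 - w + w^2/2))
  have habs : ‖(2:ℂ)‖ = 2 := by norm_num
  rw [habs]
  nlinarith [this]

lemma cosh_est (w : ℂ) (h : ‖w‖ ≤ 1) :
    ‖Complex.cosh w - 1‖ ≤ (3/4) * ‖w‖ ^ 2 := by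
  have h1 := Complex.exp_bound h (by norm_num : (0:ℕ) < 2)
  have h2 := Complex.exp_bound (x := -w) (by simpa using h) (by norm_num : (0:ℕ) < 2)
  have e1 : ∑ m ∈ Finset.range 2, w ^ m / m.factorial = 1 + w := by
    rw [Finset.sum_range_succ, Finset.sum_range_succ]
    norm_num
  have e2 : ∑ m ∈ Finset.range 2, (-w) ^ m / m.factorial = 1 - w := by
    rw [Finset.sum_range_succ, Finset.sum_range_succ]
    norm_num; ring
  rw [e1] at h1; rw [e2] at h2
  rw [norm_neg] at h2
  norm_num [Nat.factorial] at h1 h2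
  have key : Complex.cosh w - 1 =
      ((Complex.exp w - (1 + w)) + (Complex.exp (-w) - (1 - w))) / 2 := by
    rw [Complex.cosh]; ring
  rw [key, norm_div]
  have := norm_add_le (Complex.exp w - (1 + w))
    (Complex.exp (-w) - (1 - w))
  have habs : ‖(2:ℂ)‖ = 2 := by norm_num
  rw [habs]
  nlinarith [this]

lemma d_ident (b α : ℝ) (hb : 0 < b) (z : ℂ) :
    Complex.exp z + 2 * b * Real.cos (π * α) + (b : ℂ) ^ 2 * Complex.exp (-z) =
      2 * b * ((Real.sin (π * α)) * Complex.I *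
          Complex.sinh (z - (Real.log b + Complex.I * ((1 - α) * π)))
        - (Real.cos (π * α)) *
          (Complex.cosh (z - (Real.log b + Complex.I * ((1 - α) * π))) - 1)) := by
  set c : ℝ := Real.cos (π * α) with hc
  set s : ℝ := Real.sin (π * α) with hs
  set z₀ : ℂ := (Real.log b : ℂ) + Complex.I * ((1 - α) * π) with hz₀
  set w : ℂ := z - z₀ with hw
  have hbz : (b:ℂ) ≠ 0 := by exact_mod_cast hb.ne'
  have hcos : Real.cos ((1 - α) * π) = -c := by
    rw [hc]
    have : (1 - α) * π = π - π * α := by ring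
    rw [this, Real.cos_pi_sub]
  have hsin : Real.sin ((1 - α) * π) = s := by
    rw [hs]
    have : (1 - α) * π = π - π * α := by ring
    rw [this, Real.sin_pi_sub]
  have hez0 : Complex.exp z₀ = b * (-(c:ℂ) + s * Complex.I) := by
    rw [hz₀, Complex.exp_add]
    have h1 : Complex.exp ((Real.log b : ℝ) : ℂ) = (b : ℂ) := by
      rw [← Complex.ofReal_exp, Real.exp_log hb]
    have h2 : Complex.I * ((1 - (α:ℂ)) * (π:ℂ)) = (((1 - α) * π : ℝ) : ℂ) * Complex.I := by
      push_cast; ring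
    rw [h1, h2, Complex.exp_mul_I, ← Complex.ofReal_cos, ← Complex.ofReal_sin, hcos, hsin]
    push_cast; ring
  have hez0' : (b:ℂ)^2 * Complex.exp (-z₀) = b * (-(c:ℂ) - s * Complex.I) := by
    have hneg : -z₀ = ((-Real.log b : ℝ) : ℂ) + ((-((1 - α) * π) : ℝ) : ℂ) * Complex.I := by
      rw [hz₀]; push_cast; ring
    rw [hneg, Complex.exp_add]
    have h1 : Complex.exp ((-Real.log b : ℝ) : ℂ) = (b : ℂ)⁻¹ := by
      rw [← Complex.ofReal_exp, Real.exp_neg, Real.exp_log hb, Complex.ofReal_inv]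
    rw [h1, Complex.exp_mul_I, ← Complex.ofReal_cos, ← Complex.ofReal_sin,
      Real.cos_neg, Real.sin_neg, hcos, hsin]
    field_simp
    push_cast; ring
  have hz : z = z₀ + w := by rw [hw]; ring
  have hA : Complex.exp (z₀ + w) = Complex.exp z₀ * Complex.exp w := Complex.exp_add _ _
  have hB : Complex.exp (-(z₀ + w)) = Complex.exp (-z₀) * Complex.exp (-w) := by
    rw [neg_add, Complex.exp_add]
  rw [hz, hA, hB, hez0, ← mul_assoc ((b:ℂ)^2), hez0']
  have h3 : Complex.exp w = Complex.cosh w + Complex.sinh w := (Complex.cosh_add_sinh w).symm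
  have h4 : Complex.exp (-w) = Complex.cosh w - Complex.sinh w := by
    rw [← Complex.cosh_sub_sinh w]
  rw [h3, h4]
  ring

/-- For `b > 0`, `α ∈ (0,1)`, `d(z) = e^z + 2b cos(πα) + b² e^{-z}`,
`z₀ = ln b + i(1-α)π` is a zero of `d`, and for `|z - z₀| ≤ (1/2)min{1,|tan(πα)|}`
one has `|d(z)| ≥ b sin(πα) |z - z₀|`. -/
theorem zero_and_lower_bound (b α : ℝ) (hb : 0 < b) (hα0 : 0 < α) (hα1 : α < 1) :
    (fun z : ℂ => Complex.exp z + 2 * b * Real.cos (π * α) + (b : ℂ) ^ 2 * Complex.exp (-z))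
        (Real.log b + Complex.I * ((1 - α) * π)) = 0 ∧
      ∀ z : ℂ,
        ‖z - (Real.log b + Complex.I * ((1 - α) * π))‖
            ≤ (1 / 2) * min 1 |Real.tan (π * α)| →
          b * Real.sin (π * α) * ‖z - (Real.log b + Complex.I * ((1 - α) * π))‖
            ≤ ‖Complex.exp z + 2 * b * Real.cos (π * α) + (b : ℂ) ^ 2 * Complex.exp (-z)‖ := by
  have hpi : 0 < π := Real.pi_pos
  have hs : 0 < Real.sin (π * α) := by
    apply Real.sin_pos_of_pos_of_lt_pi
    · positivity
    · nlinarith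
  constructor
  · simp only
    rw [d_ident b α hb]
    simp
  · intro z hz
    set c : ℝ := Real.cos (π * α) with hc
    set s : ℝ := Real.sin (π * α) with hsdef
    set z₀ : ℂ := (Real.log b : ℂ) + Complex.I * ((1 - α) * π) with hz₀
    set w : ℂ := z - z₀ with hw
    set r : ℝ := ‖w‖ with hr
    have hrnn : 0 ≤ r := norm_nonneg w
    have hr1 : r ≤ 1/2 := by
      refine le_trans hz ?_
      have : min 1 |Real.tan (π * α)| ≤ 1 := min_le_left _ _
      linarith
    have hrle1 : r ≤ 1 := by linarith
    -- |c| * r ≤ s / 2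
    have hcr : |c| * r ≤ s / 2 := by
      rcases eq_or_ne c 0 with h0 | h0
      · rw [h0]; simp; positivity
      · have htan : |Real.tan (π * α)| = s / |c| := by
          rw [Real.tan_eq_sin_div_cos, abs_div, ← hsdef, ← hc, abs_of_pos hs]
        have hcpos : 0 < |c| := abs_pos.mpr h0
        have : r ≤ (1/2) * (s / |c|) := by
          refine le_trans hz ?_
          rw [htan]
          have : min 1 (s / |c|) ≤ s / |c| := min_le_right _ _
          linarith
        calc |c| * r ≤ |c| * ((1/2) * (s / |c|)) := by gcongr
          _ = s / 2 := by field_simp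
    have hsinh : r - (2/9) * r^3 ≤ ‖Complex.sinh w‖ := by
      have h1 := sinh_est w hrle1
      have h2 : r ≤ ‖Complex.sinh w‖ + ‖Complex.sinh w - w‖ := by
        have := norm_add_le (Complex.sinh w) (w - Complex.sinh w)
        simp only [add_sub_cancel] at this
        calc r = ‖w‖ := hr
          _ ≤ ‖Complex.sinh w‖ + ‖w - Complex.sinh w‖ := this
          _ = ‖Complex.sinh w‖ + ‖Complex.sinh w - w‖ := by
              rw [← norm_neg (w - Complex.sinh w)]; ring_nf
      linarith
    have hcosh := cosh_est w hrle1
    rw [d_ident b α hb z]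
    have habs2b : ‖2 * (b:ℂ)‖ = 2 * b := by
      rw [norm_mul]
      simp [abs_of_pos hb]
    have hX : ‖2 * (b:ℂ) *
        ((s:ℂ) * Complex.I * Complex.sinh w - (c:ℂ) * (Complex.cosh w - 1))‖
        = 2 * b * ‖(s:ℂ) * Complex.I * Complex.sinh w
            - (c:ℂ) * (Complex.cosh w - 1)‖ := by
      rw [norm_mul, habs2b]
    rw [hX]
    have hA : ‖(s:ℂ) * Complex.I * Complex.sinh w‖ =
        s * ‖Complex.sinh w‖ := by
      rw [norm_mul, norm_mul, Complex.norm_I, Complex.norm_real, Real.norm_eq_abs, abs_of_pos hs, mul_one]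
    have hB : ‖(c:ℂ) * (Complex.cosh w - 1)‖ =
        |c| * ‖Complex.cosh w - 1‖ := by
      rw [norm_mul, Complex.norm_real, Real.norm_eq_abs]
    have htri : s * ‖Complex.sinh w‖ - |c| * ‖Complex.cosh w - 1‖
        ≤ ‖(s:ℂ) * Complex.I * Complex.sinh w - (c:ℂ) * (Complex.cosh w - 1)‖ := by
      have := norm_add_le
        ((s:ℂ) * Complex.I * Complex.sinh w - (c:ℂ) * (Complex.cosh w - 1))
        ((c:ℂ) * (Complex.cosh w - 1))
      simp only [sub_add_cancel] at this
      rw [hA] at this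
      rw [← hB]
      linarith
    have hr3 : r^3 ≤ (1/4) * r := by nlinarith
    have hc1 : |c| * ‖Complex.cosh w - 1‖ ≤ (3/8) * s * r := by
      calc |c| * ‖Complex.cosh w - 1‖ ≤ |c| * ((3/4) * r^2) := by
            gcongr
        _ = (3/4) * r * (|c| * r) := by ring
        _ ≤ (3/4) * r * (s/2) := mul_le_mul_of_nonneg_left hcr (by positivity)
        _ = (3/8) * s * r := by ring
    have hs1 : (17/18) * r ≤ ‖Complex.sinh w‖ := by linarith
    have hcoshnn : 0 ≤ ‖Complex.cosh w - 1‖ := norm_nonneg _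
    nlinarith [htri, hs.le, hb.le, mul_le_mul_of_nonneg_left hs1 hs.le,
      mul_nonneg hrnn hs.le]
end

section
/- Let b > 0, α ∈ (0,1), and for real p with |p| ≤ (1-α)π − s_α (where s_α = (1/2)min{1,|tan πα|}), one has for all s ∈ ℝ: |e^{s+ip} + 2b cos(πα) + b² e^{-(s+ip)}| ≥ 4b min{cos(πα/2), sin(s_α/2)} · min{cos(πα/2), sin(s_α/2 + πα)}. -/
open Real Complex
set_option maxHeartbeats 1000000

private lemma key_quad (A B cp ca sp bb : ℝ) (hAB : A * B = 1) (hbb : 0 ≤ bb)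
    (h1 : 0 ≤ 1 + cp * ca) (h2 : 0 ≤ A + bb ^ 2 * B - 2 * bb) (hsc : sp ^ 2 + cp ^ 2 = 1) :
    (2 * bb * (cp + ca)) ^ 2
      ≤ (A * cp + 2 * bb * ca + bb ^ 2 * (B * cp)) ^ 2 + (A * sp - bb ^ 2 * (B * sp)) ^ 2 := by
  have h3 : cp ^ 2 * (A * B) = cp ^ 2 := by rw [hAB]; ring
  have h4 : sp ^ 2 * (A - bb ^ 2 * B) ^ 2 = (1 - cp ^ 2) * (A - bb ^ 2 * B) ^ 2 := by
    have hsp : sp ^ 2 = 1 - cp ^ 2 := by linarith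
    rw [hsp]
  nlinarith [sq_nonneg (A + bb ^ 2 * B - 2 * bb), h3, h4, hAB,
    mul_nonneg (mul_nonneg (by linarith : (0:ℝ) ≤ 4 * bb) h1) h2]

/-- For `b > 0`, `α ∈ (0,1)`, `s_α = (1/2)min{1,|tan πα|}`, and real `p` with
`|p| ≤ (1-α)π − s_α`, for all `s ∈ ℝ`:
`|e^{s+ip} + 2b cos(πα) + b² e^{-(s+ip)}|
  ≥ 4b min{cos(πα/2), sin(s_α/2)} · min{cos(πα/2), sin(s_α/2 + πα)}`. -/
theorem abs_d_uniform_lower_bound (b α p : ℝ) (hb : 0 < b) (hα0 : 0 < α) (hα1 : α < 1)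
    (hp : |p| ≤ (1 - α) * π - (1 / 2) * min 1 |Real.tan (π * α)|) :
    ∀ s : ℝ,
      4 * b * min (Real.cos (π * α / 2)) (Real.sin ((1 / 2) * min 1 |Real.tan (π * α)| / 2))
          * min (Real.cos (π * α / 2))
              (Real.sin ((1 / 2) * min 1 |Real.tan (π * α)| / 2 + π * α))
        ≤ ‖Complex.exp (s + p * Complex.I) + 2 * b * Real.cos (π * α)
            + (b : ℂ) ^ 2 * Complex.exp (-(s + p * Complex.I))‖ := by
  intro s
  have hπ := Real.pi_pos
  set sα := (1 / 2) * min 1 |Real.tan (π * α)| with hsαdef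
  set M1 := min (Real.cos (π * α / 2)) (Real.sin (sα / 2)) with hM1def
  set M2 := min (Real.cos (π * α / 2)) (Real.sin (sα / 2 + π * α)) with hM2def
  have hsα0 : 0 ≤ sα := by
    rw [hsαdef]; positivity
  have hsα1 : sα ≤ 1 / 2 := by
    have : min 1 |Real.tan (π * α)| ≤ 1 := min_le_left _ _
    rw [hsαdef]; linarith
  have hsαle : sα ≤ (1 - α) * π := by
    have := abs_nonneg p; linarith
  have hπα0 : 0 < π * α := by positivity
  have hπα1 : π * α < π := by nlinarith
  -- nonnegativity of M1, M2
  have hcosh : 0 ≤ Real.cos (π * α / 2) := by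
    apply Real.cos_nonneg_of_mem_Icc
    constructor <;> [linarith; linarith]
  have hsin1 : 0 ≤ Real.sin (sα / 2) := by
    apply Real.sin_nonneg_of_nonneg_of_le_pi <;> nlinarith [Real.pi_gt_three]
  have hsin2 : 0 ≤ Real.sin (sα / 2 + π * α) := by
    apply Real.sin_nonneg_of_nonneg_of_le_pi
    · linarith
    · nlinarith
  have hM10 : 0 ≤ M1 := le_min hcosh hsin1
  have hM20 : 0 ≤ M2 := le_min hcosh hsin2
  -- Step B : 2*M1*M2 ≤ cos p + cos (π α)
  have hq1 : 0 ≤ |p| := abs_nonneg p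
  have hq2 : |p| ≤ (1 - α) * π - sα := hp
  have hX : M1 ≤ Real.cos ((|p| + π * α) / 2) := by
    have h1 : Real.cos (π / 2 - sα / 2) ≤ Real.cos ((|p| + π * α) / 2) := by
      apply Real.cos_le_cos_of_nonneg_of_le_pi
      · positivity
      · linarith
      · nlinarith
    rw [Real.cos_pi_div_two_sub] at h1
    exact le_trans (min_le_right _ _) h1
  have hY : M2 ≤ Real.cos ((|p| - π * α) / 2) := by
    rcases le_or_gt (π * α) |p| with h | h
    · have h1 : Real.cos (π / 2 - (sα / 2 + π * α)) ≤ Real.cos ((|p| - π * α) / 2) := by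
        apply Real.cos_le_cos_of_nonneg_of_le_pi
        · linarith
        · nlinarith
        · nlinarith
      rw [Real.cos_pi_div_two_sub] at h1
      exact le_trans (min_le_right _ _) h1
    · have heq : Real.cos ((|p| - π * α) / 2) = Real.cos ((π * α - |p|) / 2) := by
        rw [← Real.cos_neg]; ring_nf
      rw [heq]
      have h1 : Real.cos (π * α / 2) ≤ Real.cos ((π * α - |p|) / 2) := by
        apply Real.cos_le_cos_of_nonneg_of_le_pi
        · linarith
        · linarith
        · linarith
      exact le_trans (min_le_left _ _) h1
  have hB : 2 * M1 * M2 ≤ Real.cos p + Real.cos (π * α) := by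
    have : Real.cos p = Real.cos |p| := (Real.cos_abs p).symm
    rw [this, Real.cos_add_cos]
    have := mul_le_mul hX hY hM20 (le_trans hM10 hX)
    nlinarith
  -- Step A : 2*b*(cos p + cos πα) ≤ abs d
  have hcc0 : 0 ≤ Real.cos p + Real.cos (π * α) := by nlinarith
  set d : ℂ := Complex.exp (s + p * Complex.I) + 2 * b * Real.cos (π * α)
      + (b : ℂ) ^ 2 * Complex.exp (-(s + p * Complex.I)) with hddef
  have hre : d.re = Real.exp s * Real.cos p + 2 * b * Real.cos (π * α)
      + b ^ 2 * (Real.exp (-s) * Real.cos p) := by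
    simp only [hddef, ← Complex.ofReal_pow, Complex.add_re, Complex.add_im, Complex.mul_re,
      Complex.mul_im, Complex.exp_re, Complex.exp_im, Complex.neg_re, Complex.neg_im,
      Complex.ofReal_re, Complex.ofReal_im, Complex.I_re, Complex.I_im, Complex.re_ofNat,
      Complex.im_ofNat]
    simp [Real.cos_neg, Real.sin_neg]
  have him : d.im = Real.exp s * Real.sin p - b ^ 2 * (Real.exp (-s) * Real.sin p) := by
    simp only [hddef, ← Complex.ofReal_pow, Complex.add_re, Complex.add_im, Complex.mul_re,
      Complex.mul_im, Complex.exp_re, Complex.exp_im, Complex.neg_re, Complex.neg_im,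
      Complex.ofReal_re, Complex.ofReal_im, Complex.I_re, Complex.I_im, Complex.re_ofNat,
      Complex.im_ofNat]
    simp [Real.cos_neg, Real.sin_neg]
    ring
  have hA : 2 * b * (Real.cos p + Real.cos (π * α)) ≤ ‖d‖ := by
    have hexp : Real.exp s * Real.exp (-s) = 1 := by
      rw [← Real.exp_add]; simp
    have hE0 : 0 < Real.exp s := Real.exp_pos s
    have hE0' : 0 < Real.exp (-s) := Real.exp_pos (-s)
    have h2 : 0 ≤ Real.exp s + b ^ 2 * Real.exp (-s) - 2 * b := by
      nlinarith [sq_nonneg (Real.exp s - b)]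
    have h1 : 0 ≤ 1 + Real.cos p * Real.cos (π * α) := by
      nlinarith [Real.neg_one_le_cos p, Real.cos_le_one p, Real.neg_one_le_cos (π * α),
        Real.cos_le_one (π * α)]
    have hkey := key_quad (Real.exp s) (Real.exp (-s)) (Real.cos p) (Real.cos (π * α))
      (Real.sin p) b hexp hb.le h1 h2 (Real.sin_sq_add_cos_sq p)
    have hsq : (2 * b * (Real.cos p + Real.cos (π * α))) ^ 2 ≤ ‖d‖ ^ 2 := by
      rw [Complex.sq_norm, Complex.normSq_apply, hre, him]
      nlinarith [hkey]
    have habs0 : 0 ≤ ‖d‖ := norm_nonneg d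
    have hx0 : 0 ≤ 2 * b * (Real.cos p + Real.cos (π * α)) :=
      mul_nonneg (by linarith) hcc0
    nlinarith [hsq, habs0, hx0]
  calc 4 * b * M1 * M2 = 2 * b * (2 * M1 * M2) := by ring
    _ ≤ 2 * b * (Real.cos p + Real.cos (π * α)) := by nlinarith
    _ ≤ ‖d‖ := hA
end
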